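/- arXiv:math/0505424 — 2 statements merged into one kernel-verified Lean document; each statement's English description precedes it below -/
import Mathlib

section
/- Let P'(z) = ∏_{j=1}^{n−1}(z−ζ_j) and P(z) = ∫_β^z P'(w) dw, and suppose z_i is a simple root of P. Then, viewing z_i as an implicit function of the critical point ζ_j (with the other ζ_k and β fixed), one has ∂z_i/∂ζ_j = (1/P'(z_i)) ∫_β^{z_i} P'(w)/(w−ζ_j) dw. -/
open Polynomial Filter Topology

/-!
Since `∂_s P_s' = -Q = -R'` and every `P_s` vanishes at `β`, the family is affine in `s`:
`P_s = P_{ζ₀} - (s - ζ₀) R`. Away from the zeros of `R`, the equation `P_s(z) = 0` therefore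
reads `s = φ(z) := ζ₀ + P_{ζ₀}(z) / R(z)`, so the root `z(s)` is the local inverse of the
analytic function `φ`, whose derivative at the simple root `zᵢ` is `P_{ζ₀}'(zᵢ) / R(zᵢ) ≠ 0`.
If `R(zᵢ) = 0`, then `zᵢ` is a root of every `P_s` and the constant function works.
-/

namespace Polynomial

variable {K : Type*}

theorem eq_of_derivative_eq_of_eval_eq [Ring K] [IsAddTorsionFree K] {p q : K[X]} {x : K}
    (hd : derivative p = derivative q) (hx : p.eval x = q.eval x) : p = q := by
  have hC := eq_C_of_derivative_eq_zero (p := p - q) (by rw [derivative_sub, hd, sub_self])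
  have hcoeff : (p - q).coeff 0 = 0 := by
    simpa [hx] using (congrArg (eval x) hC).symm
  rwa [hcoeff, map_zero, sub_eq_zero] at hC

theorem eval_eq_sub_mul_of_derivative_eq_X_sub_C_mul [CommRing K] [IsAddTorsionFree K]
    {P : K → K[X]} {Q R : K[X]} {β : K} (hPd : ∀ s, derivative (P s) = (X - C s) * Q)
    (hPβ : ∀ s, (P s).eval β = 0) (hRd : derivative R = Q) (hRβ : R.eval β = 0) (s t w : K) :
    (P s).eval w = (P t).eval w - (s - t) * R.eval w := by
  rw [eq_of_derivative_eq_of_eval_eq (p := P s) (q := P t - C (s - t) * R) (x := β)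
    (by simp only [derivative_mul, derivative_C, hPd, hRd, map_sub]; ring)
    (by simp [hPβ, hRβ])]
  simp

end Polynomial

theorem AnalyticAt.exists_rightInverse {𝕜 : Type*} [NontriviallyNormedField 𝕜] [CompleteSpace 𝕜]
    [CharZero 𝕜] {f : 𝕜 → 𝕜} {x : 𝕜} (hf : AnalyticAt 𝕜 f x) (hf' : deriv f x ≠ 0) :
    ∃ g : 𝕜 → 𝕜, AnalyticAt 𝕜 g (f x) ∧ g (f x) = x ∧ (∀ᶠ y in 𝓝 (f x), f (g y) = y) ∧
      deriv g (f x) = (deriv f x)⁻¹ :=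
  ⟨_, hf.analyticAt_localInverse hf', HasStrictFDerivAt.localInverse_apply_image ..,
    HasStrictDerivAt.eventually_right_inverse ..,
    (hf.hasStrictDerivAt.to_localInverse hf').hasDerivAt.deriv⟩

/-- Let `P'(z) = (z - ζ_j) Q(z)` with `Q = ∏_{k≠j}(z - ζ_k)`, and for each
value `s` of `ζ_j` let `P s` be the antiderivative of `(z-s)Q(z)` vanishing
at `β`. If `z_i` is a simple root of `P ζ₀`, then locally `z_i` is an
analytic function of `ζ_j`, and `∂z_i/∂ζ_j = (1/P'(z_i)) ∫_β^{z_i} P'(w)/(w-ζ_j) dw`,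
where the integral equals `R(z_i)` for `R` the antiderivative of `Q` vanishing at `β`. -/
theorem stmt7 (Q : Polynomial ℂ) (β ζ₀ zi : ℂ) (P : ℂ → Polynomial ℂ)
    (hPd : ∀ s : ℂ, Polynomial.derivative (P s) = (Polynomial.X - Polynomial.C s) * Q)
    (hPβ : ∀ s : ℂ, (P s).eval β = 0)
    (hroot : (P ζ₀).eval zi = 0)
    (hsimple : (zi - ζ₀) * Q.eval zi ≠ 0)
    (R : Polynomial ℂ) (hRd : Polynomial.derivative R = Q) (hRβ : R.eval β = 0) :
    ∃ z : ℂ → ℂ, AnalyticAt ℂ z ζ₀ ∧ z ζ₀ = zi ∧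
      (∀ᶠ s in nhds ζ₀, (P s).eval (z s) = 0) ∧
      deriv z ζ₀ = (1 / ((zi - ζ₀) * Q.eval zi)) * R.eval zi := by
  have hP := eval_eq_sub_mul_of_derivative_eq_X_sub_C_mul hPd hPβ hRd hRβ
  by_cases hRzi : R.eval zi = 0
  · exact ⟨fun _ => zi, analyticAt_const, rfl,
      .of_forall fun s => by rw [hP s ζ₀]; simp [hroot, hRzi], by simp [hRzi]⟩
  set φ : ℂ → ℂ := fun w => ζ₀ + (P ζ₀).eval w / R.eval w
  have hφzi : φ zi = ζ₀ := by simp [φ, hroot]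
  have hφ' : HasDerivAt φ ((zi - ζ₀) * Q.eval zi / R.eval zi) zi := by
    refine ((((P ζ₀).hasDerivAt zi).fun_div (R.hasDerivAt zi) hRzi).const_add ζ₀).congr_deriv ?_
    simp only [hPd, hRd, hroot, eval_mul, eval_sub, eval_X, eval_C, zero_mul, sub_zero]
    field_simp
  have hφa : AnalyticAt ℂ φ zi :=
    analyticAt_const.add ((AnalyticAt.aeval_polynomial analyticAt_id _).div
      (AnalyticAt.aeval_polynomial analyticAt_id _) hRzi)
  obtain ⟨z, hza, hzzi, hright, hderiv⟩ :=
    hφa.exists_rightInverse (hφ'.deriv ▸ div_ne_zero hsimple hRzi)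
  rw [hφzi] at hza hzzi hright hderiv
  have hRz : ∀ᶠ s in 𝓝 ζ₀, R.eval (z s) ≠ 0 :=
    (R.continuous.continuousAt.comp hza.continuousAt).eventually_ne (by simpa [hzzi] using hRzi)
  refine ⟨z, hza, hzzi, ?_, ?_⟩
  · filter_upwards [hright, hRz] with s hs hRs
    simp only [φ] at hs
    field_simp at hs
    rw [hP s ζ₀]
    linear_combination hs
  · rw [hderiv, hφ'.deriv]
    field_simp
end

section
/- Let n = 8, β = 0.7290857513, and P(z) = ∫_β^z (w + 0.2035409790)⁵ (w² − 0.5410836525·w + 0.7327229666) dw. Then the quadratic factor w² − 0.5410836525·w + 0.7327229666 has two non-real complex conjugate roots ρ, ρ̄, and the three distinct critical points −0.2035409790, ρ, ρ̄ of P are all at the same distance from β, and this common distance r satisfies 0.9 < r < 0.97. -/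
/-!
A non-real root `ρ` of a real quadratic `z² - p z + q` satisfies `ρ + ρ̄ = p` and `ρ ρ̄ = q`, so
`|ρ - β|² = (ρ - β)(ρ̄ - β) = β² - p β + q` is the value of the quadratic at `β`. For the paper's
data this value is `(β + 0.2035409790)²` up to rounding, which is the squared distance from `β` to
the real critical point.
-/

open ComplexConjugate

namespace Complex

noncomputable def upperRoot (p q : ℝ) : ℂ := ⟨p / 2, √(q - p ^ 2 / 4)⟩

lemma upperRoot_im_pos {p q : ℝ} (h : p ^ 2 < 4 * q) : 0 < (upperRoot p q).im :=
  Real.sqrt_pos.mpr (by linarith)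

lemma upperRoot_isRoot {p q : ℝ} (h : p ^ 2 ≤ 4 * q) :
    upperRoot p q ^ 2 - p * upperRoot p q + q = 0 := by
  have hs : √(q - p ^ 2 / 4) ^ 2 = q - p ^ 2 / 4 := Real.sq_sqrt (by linarith)
  apply Complex.ext
  · simp only [upperRoot, add_re, sub_re, mul_re, ofReal_re, ofReal_im, zero_re, pow_two] at hs ⊢
    linear_combination -hs
  · simp only [upperRoot, add_im, sub_im, mul_im, ofReal_re, ofReal_im, zero_im, pow_two]
    ring

lemma conj_isRoot_of_isRoot {p q : ℝ} {ρ : ℂ} (h : ρ ^ 2 - p * ρ + q = 0) :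
    conj ρ ^ 2 - p * conj ρ + q = 0 := by
  simpa using congrArg conj h

lemma ne_ofReal_of_im_ne_zero {z : ℂ} (hz : z.im ≠ 0) (x : ℝ) : z ≠ x :=
  fun h => hz (by simp [h])

lemma normSq_sub_ofReal_of_isRoot {p q : ℝ} {ρ : ℂ} (hρ : ρ.im ≠ 0)
    (h : ρ ^ 2 - p * ρ + q = 0) (β : ℝ) :
    normSq (ρ - β) = β ^ 2 - p * β + q := by
  have hne : ρ - conj ρ ≠ 0 := sub_ne_zero.mpr fun e => hρ (conj_eq_iff_im.mp e.symm)
  have hsum : ρ + conj ρ = p := by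
    have hprod_zero : (ρ - conj ρ) * (ρ + conj ρ - p) = 0 := by
      linear_combination h - conj_isRoot_of_isRoot h
    exact sub_eq_zero.mp ((mul_eq_zero.mp hprod_zero).resolve_left hne)
  have hprod : ρ * conj ρ = q := by linear_combination -h + ρ * hsum
  apply ofReal_injective
  rw [normSq_eq_conj_mul_self]
  push_cast
  simp only [map_sub, conj_ofReal]
  linear_combination hprod - β * hsum

lemma norm_sub_ofReal_of_isRoot {p q : ℝ} {ρ : ℂ} (hρ : ρ.im ≠ 0)
    (h : ρ ^ 2 - p * ρ + q = 0) (β : ℝ) :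
    ‖ρ - β‖ = √(β ^ 2 - p * β + q) := by
  rw [norm_def, normSq_sub_ofReal_of_isRoot hρ h]

end Complex

lemma Real.abs_sqrt_sub_le {s r δ : ℝ} (hδ : 0 ≤ r + δ) (hlo : (r - δ) ^ 2 ≤ s)
    (hhi : s ≤ (r + δ) ^ 2) : |√s - r| ≤ δ := by
  rw [abs_sub_le_iff]
  constructor
  · linarith [Real.sqrt_le_sqrt hhi, Real.sqrt_sq hδ]
  · linarith [Real.le_sqrt_of_sq_le hlo]

/-- For the degree-8 example of the paper with `β = 0.7290857513` and
`P'(z) = (z + 0.2035409790)⁵ (z² - 0.5410836525 z + 0.7327229666)`, the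
quadratic factor has two non-real conjugate roots `ρ, ρ̄`, the three
distinct critical points `-0.2035409790, ρ, ρ̄` are all at the same
distance (to within `10⁻⁶`) from `β`, and this common distance `r`
satisfies `0.9 < r < 0.97`. -/
theorem stmt18 (β : ℝ) (hβ : β = 0.7290857513) :
    ∃ (ρ : ℂ) (r : ℝ), ρ.im ≠ 0 ∧
      ρ ^ 2 - (0.5410836525 : ℂ) * ρ + (0.7327229666 : ℂ) = 0 ∧
      ((starRingEnd ℂ) ρ) ^ 2 - (0.5410836525 : ℂ) * ((starRingEnd ℂ) ρ) +
        (0.7327229666 : ℂ) = 0 ∧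
      ρ ≠ (starRingEnd ℂ) ρ ∧ ρ ≠ (-0.2035409790 : ℂ) ∧
      (starRingEnd ℂ) ρ ≠ (-0.2035409790 : ℂ) ∧
      |‖ρ - (β : ℂ)‖ - r| ≤ 1e-6 ∧
      |‖(starRingEnd ℂ) ρ - (β : ℂ)‖ - r| ≤ 1e-6 ∧
      |‖(-0.2035409790 : ℂ) - (β : ℂ)‖ - r| ≤ 1e-6 ∧
      0.9 < r ∧ r < 0.97 := by
  subst hβ
  set p : ℝ := 0.5410836525
  set q : ℝ := 0.7327229666
  set c : ℝ := -0.2035409790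
  obtain ⟨hp, hq, hc⟩ : (p : ℂ) = 0.5410836525 ∧ (q : ℂ) = 0.7327229666 ∧
      (c : ℂ) = -0.2035409790 := by norm_num [p, q, c]
  rw [← hp, ← hq, ← hc]
  have hdisc : p ^ 2 < 4 * q := by norm_num [p, q]
  set ρ := Complex.upperRoot p q
  have him : ρ.im ≠ 0 := (Complex.upperRoot_im_pos hdisc).ne'
  have hroot := Complex.upperRoot_isRoot hdisc.le
  have hconj_im : (conj ρ).im ≠ 0 := by simpa using him
  have hdist : |√(0.7290857513 ^ 2 - p * 0.7290857513 + q) - 0.9326267303| ≤ 1e-6 :=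
    Real.abs_sqrt_sub_le (by norm_num) (by norm_num [p, q]) (by norm_num [p, q])
  -- `r = β - c` exactly
  refine ⟨ρ, 0.9326267303, him, hroot, Complex.conj_isRoot_of_isRoot hroot,
    fun h => him (Complex.conj_eq_iff_im.mp h.symm), Complex.ne_ofReal_of_im_ne_zero him c,
    Complex.ne_ofReal_of_im_ne_zero hconj_im c, ?_, ?_, ?_, by norm_num, by norm_num⟩
  · rwa [Complex.norm_sub_ofReal_of_isRoot him hroot]
  · rwa [Complex.norm_sub_ofReal_of_isRoot hconj_im (Complex.conj_isRoot_of_isRoot hroot)]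
  · rw [← Complex.ofReal_sub, Complex.norm_real, Real.norm_eq_abs]
    norm_num [c]
end
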